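/- Let C ⊆ F4^n be an additive code with M = |C| codewords, and let A_1^⊥ and A_2^⊥ denote the numbers of codewords of Hamming weight 1 and weight 2, respectively, in C^⊥_tr. Then the second Pless power moment holds: 16·Σ_{v ∈ C} wt_H(v)² = M·((9n² + 3n) − (6n − 2)·A_1^⊥ + 2·A_2^⊥). -/
import Mathlib


abbrev F4 : Type := GaloisField 2 2
noncomputable instance : Fintype F4 := Fintype.ofFinite _
noncomputable instance : DecidableEq F4 := Classical.decEq _

/-- The trace Hermitian inner product `⟨u,v⟩_tr = Σᵢ (uᵢ vᵢ² + uᵢ² vᵢ)` on `F4^n`. -/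
noncomputable def trInner {n : ℕ} (u v : Fin n → F4) : F4 :=
  ∑ i, (u i * (v i) ^ 2 + (u i) ^ 2 * v i)

/-- The trace-Hermitian dual of a code `C ⊆ F4^n`. -/
noncomputable def trDual {n : ℕ} (C : Set (Fin n → F4)) : Set (Fin n → F4) :=
  {u | ∀ v ∈ C, trInner u v = 0}

lemma F4card : Fintype.card F4 = 4 := by
  have := GaloisField.card 2 2 (by norm_num)
  rwa [Nat.card_eq_fintype_card] at this

lemma F4pow4 (x : F4) : x ^ 4 = x := by
  have := FiniteField.pow_card x
  rwa [F4card] at this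

lemma F4two : (2 : F4) = 0 := by
  have : ((2 : ℕ) : F4) = 0 := (CharP.cast_eq_zero_iff F4 2 2).2 dvd_rfl
  simpa using this

lemma F4addpow2 (x y : F4) : (x + y)^2 = x^2 + y^2 := by
  have : (x + y)^2 = x^2 + 2*x*y + y^2 := by ring
  rw [this, F4two]; ring

lemma F4_f2 (x : F4) : x ^ 2 = x ↔ x = 0 ∨ x = 1 := by
  constructor
  · intro h
    have : x * (x - 1) = 0 := by rw [sq] at h; linear_combination h
    rcases mul_eq_zero.1 this with h | h
    · exact Or.inl h
    · exact Or.inr (by linear_combination h)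
  · rintro (rfl | rfl) <;> ring

/-- The quadratic character used in the proof. -/
noncomputable def χ (x : F4) : ℤ := if x = 0 then 1 else -1

lemma chi_zero : χ 0 = 1 := by simp [χ]

lemma chi_add (x y : F4) (hx : x = 0 ∨ x = 1) (hy : y = 0 ∨ y = 1) :
    χ (x + y) = χ x * χ y := by
  have h11 : (1 : F4) + 1 = 0 := by rw [one_add_one_eq_two, F4two]
  rcases hx with rfl | rfl <;> rcases hy with rfl | rfl <;>
    simp [χ, h11, one_ne_zero]

lemma trInner_f2 {n : ℕ} (u v : Fin n → F4) : trInner u v = 0 ∨ trInner u v = 1 := by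
  rw [← F4_f2]
  unfold trInner
  rw [sum_pow_char]
  refine Finset.sum_congr rfl fun i _ => ?_
  have h1 : (u i * v i ^ 2 + u i ^ 2 * v i)^2 = u i ^2 * (v i)^4 + (u i)^4 * (v i)^2 := by
    rw [F4addpow2]; ring
  rw [h1, F4pow4, F4pow4]; ring

lemma trInner_add_left {n : ℕ} (u u' v : Fin n → F4) :
    trInner (u + u') v = trInner u v + trInner u' v := by
  unfold trInner
  rw [← Finset.sum_add_distrib]
  refine Finset.sum_congr rfl fun i _ => ?_
  have : (u + u') i = u i + u' i := rfl
  rw [this, F4addpow2]; ring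

lemma trInner_add_right {n : ℕ} (u v v' : Fin n → F4) :
    trInner u (v + v') = trInner u v + trInner u v' := by
  unfold trInner
  rw [← Finset.sum_add_distrib]
  refine Finset.sum_congr rfl fun i _ => ?_
  have : (v + v') i = v i + v' i := rfl
  rw [this, F4addpow2]; ring

lemma chi_trInner_mul {n : ℕ} (u u' v : Fin n → F4) :
    χ (trInner u v) * χ (trInner u' v) = χ (trInner (u + u') v) := by
  rw [trInner_add_left, chi_add _ _ (trInner_f2 u v) (trInner_f2 u' v)]

lemma trInner_single {n : ℕ} (i : Fin n) (a : F4) (v : Fin n → F4) :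
    trInner (Pi.single i a) v = a * (v i)^2 + a^2 * v i := by
  unfold trInner
  rw [Finset.sum_eq_single i]
  · simp
  · intro k _ hk
    simp [Pi.single_eq_of_ne hk]
  · simp

lemma cube_eq_one {c : F4} (hc : c ≠ 0) : c ^ 3 = 1 := by
  have h4 : c * c ^ 3 = c * 1 := by rw [mul_one, ← pow_succ']; exact F4pow4 c
  exact mul_left_cancel₀ hc h4

lemma trace_roots : Finset.univ.filter (fun b : F4 => b + b^2 = 0) = {0, 1} := by
  ext b
  simp only [Finset.mem_filter, Finset.mem_univ, true_and, Finset.mem_insert,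
    Finset.mem_singleton]
  constructor
  · intro h
    have : b ^ 2 = b := by linear_combination h - F4two * b
    exact (F4_f2 b).1 this
  · rintro (rfl | rfl)
    · ring
    · have := F4two; rw [one_pow]; rw [one_add_one_eq_two, this]

lemma sum_chi_trace : ∑ b : F4, χ (b + b^2) = 0 := by
  have key : ∀ b : F4, χ (b + b^2) = (if b + b^2 = 0 then 2 else 0) - 1 := by
    intro b; by_cases h : b + b^2 = 0 <;> simp [χ, h]
  rw [Finset.sum_congr rfl fun b _ => key b, Finset.sum_sub_distrib,
    Finset.sum_ite, Finset.sum_const, Finset.sum_const]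
  have h2 : (Finset.univ.filter (fun b : F4 => b + b^2 = 0)).card = 2 := by
    rw [trace_roots]
    rw [Finset.card_insert_of_notMem (by simp), Finset.card_singleton]
  rw [h2]
  simp [Finset.card_univ, F4card]

lemma sum_chi_coord (c : F4) :
    ∑ a : F4, χ (a * c^2 + a^2 * c) = if c = 0 then 4 else 0 := by
  by_cases hc : c = 0
  · subst hc
    simp [χ, Finset.card_univ, F4card]
  · rw [if_neg hc]
    have hc3 : c^3 = 1 := cube_eq_one hc
    have key : ∑ b : F4, χ (b + b^2) = ∑ a : F4, χ (a * c^2 + a^2 * c) := by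
      refine Finset.sum_equiv (Equiv.mulRight₀ c hc) (by simp) ?_
      intro b _
      show χ (b + b^2) = χ (b * c * c^2 + (b * c)^2 * c)
      congr 1
      linear_combination (-(b : F4) - b^2) * hc3
    rw [← key, sum_chi_trace]

open Classical in
/-- Character orthogonality over the code. -/
lemma sum_char {n : ℕ} (C : AddSubgroup (Fin n → F4)) (u : Fin n → F4) :
    ∑ v ∈ (Set.toFinite (C : Set (Fin n → F4))).toFinset, χ (trInner u v) =
      if u ∈ trDual (C : Set (Fin n → F4)) then
        ((Set.toFinite (C : Set (Fin n → F4))).toFinset.card : ℤ) else 0 := by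
  set CF := (Set.toFinite (C : Set (Fin n → F4))).toFinset with hCF
  have hmem : ∀ v, v ∈ CF ↔ v ∈ C := by
    intro v; rw [hCF, Set.Finite.mem_toFinset]; rfl
  by_cases h : u ∈ trDual (C : Set (Fin n → F4))
  · rw [if_pos h]
    rw [Finset.sum_congr rfl (fun v hv => by
      rw [h v ((hmem v).1 hv), chi_zero])]
    simp
  · rw [if_neg h]
    obtain ⟨v₀, hv₀C, hv₀⟩ : ∃ v₀ ∈ C, trInner u v₀ ≠ 0 := by
      by_contra hc
      push_neg at hc
      exact h (fun v hv => hc v hv)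
    have hv₀1 : trInner u v₀ = 1 := (trInner_f2 u v₀).resolve_left hv₀
    have key : ∑ v ∈ CF, χ (trInner u (v + v₀)) = ∑ v ∈ CF, χ (trInner u v) := by
      refine Finset.sum_equiv (Equiv.addRight v₀) ?_ (fun v _ => rfl)
      intro v
      simp only [hmem, Equiv.coe_addRight]
      constructor
      · intro hv; exact AddSubgroup.add_mem C hv hv₀C
      · intro hv
        have := AddSubgroup.sub_mem C hv hv₀C
        simpa using this
    have key2 : ∀ v, χ (trInner u (v + v₀)) = - χ (trInner u v) := by
      intro v
      rw [trInner_add_right, chi_add _ _ (trInner_f2 u v) (trInner_f2 u v₀), hv₀1]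
      simp [χ, one_ne_zero]
    rw [Finset.sum_congr rfl (fun v _ => key2 v), Finset.sum_neg_distrib] at key
    linarith

/-- Weight formula: the character sum at `v`. -/
lemma weight_formula {n : ℕ} (v : Fin n → F4) :
    ∑ i : Fin n, ∑ a ∈ Finset.univ.erase (0 : F4), χ (trInner (Pi.single i a) v) =
      3 * n - 4 * (hammingNorm v : ℤ) := by
  have key : ∀ i : Fin n, ∑ a ∈ Finset.univ.erase (0 : F4), χ (trInner (Pi.single i a) v)
      = 3 - 4 * (if v i ≠ 0 then (1 : ℤ) else 0) := by
    intro i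
    have h1 : ∑ a : F4, χ (trInner (Pi.single i a) v) =
        χ (trInner (Pi.single i (0:F4)) v) +
        ∑ a ∈ Finset.univ.erase (0 : F4), χ (trInner (Pi.single i a) v) :=
      (Finset.add_sum_erase _ _ (Finset.mem_univ 0)).symm
    have h2 : ∀ a, trInner (Pi.single i a) v = a * (v i)^2 + a^2 * v i :=
      fun a => trInner_single i a v
    have h0 : χ (trInner (Pi.single i (0:F4)) v) = 1 := by
      rw [h2]; simp [chi_zero]
    have h3 : ∑ a : F4, χ (trInner (Pi.single i a) v) = if v i = 0 then 4 else 0 := by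
      rw [Finset.sum_congr rfl (fun a _ => by rw [h2 a]), sum_chi_coord]
    by_cases hv : v i = 0
    · rw [if_pos hv] at h3
      simp only [hv, ne_eq, not_true_eq_false, if_false]
      omega
    · rw [if_neg hv] at h3
      simp only [ne_eq, hv, not_false_eq_true, if_true]
      omega
  rw [Finset.sum_congr rfl (fun i _ => key i), Finset.sum_sub_distrib]
  rw [Finset.sum_const, ← Finset.mul_sum, Finset.sum_boole]
  have hwt : (Finset.filter (fun i => v i ≠ 0) Finset.univ).card = hammingNorm v := by
    unfold hammingNorm; congr 1
  simp only [Finset.card_univ, Fintype.card_fin, nsmul_eq_mul, hwt]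
  ring

lemma supp_card {n : ℕ} (u : Fin n → F4) :
    hammingNorm u = (Finset.univ.filter (fun i => u i ≠ 0)).card := by
  unfold hammingNorm; congr 1

lemma single_supp {n : ℕ} (i : Fin n) (a : F4) (ha : a ≠ 0) :
    Finset.univ.filter (fun k => (Pi.single i a : Fin n → F4) k ≠ 0) = {i} := by
  ext k
  simp only [Finset.mem_filter, Finset.mem_univ, true_and, Finset.mem_singleton]
  constructor
  · intro h
    by_contra hk
    rw [Pi.single_eq_of_ne hk] at h
    exact h rfl
  · rintro rfl
    simpa using ha

lemma hammingNorm_single' {n : ℕ} (i : Fin n) (a : F4) (ha : a ≠ 0) :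
    hammingNorm (Pi.single i a : Fin n → F4) = 1 := by
  rw [supp_card, single_supp i a ha, Finset.card_singleton]

lemma pair_supp {n : ℕ} (i j : Fin n) (hij : i ≠ j) (a b : F4) (ha : a ≠ 0) (hb : b ≠ 0) :
    Finset.univ.filter
      (fun k => (Pi.single i a + Pi.single j b : Fin n → F4) k ≠ 0) = {i, j} := by
  ext k
  simp only [Finset.mem_filter, Finset.mem_univ, true_and, Finset.mem_insert,
    Finset.mem_singleton, Pi.add_apply]
  constructor
  · intro h
    by_contra hk
    push_neg at hk
    rw [Pi.single_eq_of_ne (Ne.symm (Ne.symm hk.1)), Pi.single_eq_of_ne hk.2] at h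
    exact h (by ring)
  · rintro (rfl | rfl)
    · rw [Pi.single_eq_same, Pi.single_eq_of_ne hij]
      simpa using ha
    · rw [Pi.single_eq_same, Pi.single_eq_of_ne (Ne.symm hij)]
      simpa using hb

lemma hammingNorm_pair {n : ℕ} (i j : Fin n) (hij : i ≠ j) (a b : F4)
    (ha : a ≠ 0) (hb : b ≠ 0) :
    hammingNorm (Pi.single i a + Pi.single j b : Fin n → F4) = 2 := by
  rw [supp_card, pair_supp i j hij a b ha hb]
  rw [Finset.card_insert_of_notMem (by simpa using hij), Finset.card_singleton]

open Classical in
/-- Codewords of the dual of given weight, as a finset. -/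
noncomputable def Wt (n : ℕ) (C : AddSubgroup (Fin n → F4)) (k : ℕ) : Finset (Fin n → F4) :=
  Finset.univ.filter (fun u => u ∈ trDual (C : Set (Fin n → F4)) ∧ hammingNorm u = k)

open Classical in
lemma Wt_card (n : ℕ) (C : AddSubgroup (Fin n → F4)) (k : ℕ) :
    {u ∈ trDual (C : Set (Fin n → F4)) | hammingNorm u = k}.ncard = (Wt n C k).card := by
  rw [← Set.ncard_coe_finset]
  congr 1
  ext u
  simp [Wt]

open Classical in
lemma count1 {n : ℕ} (C : AddSubgroup (Fin n → F4)) :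
    ∑ i : Fin n, ∑ a ∈ Finset.univ.erase (0 : F4),
        (if Pi.single i a ∈ trDual (C : Set (Fin n → F4)) then (1 : ℤ) else 0) =
      ((Wt n C 1).card : ℤ) := by
  rw [← Finset.sum_product']
  rw [Finset.sum_boole]
  congr 1
  refine Finset.card_bij (fun p _ => Pi.single p.1 p.2) ?_ ?_ ?_
  · rintro ⟨i, a⟩ hp
    simp only [Finset.mem_filter, Finset.mem_product, Finset.mem_univ, Finset.mem_erase,
      true_and] at hp
    simp only [Wt, Finset.mem_filter, Finset.mem_univ, true_and]
    exact ⟨hp.2, hammingNorm_single' i a hp.1.1⟩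
  · rintro ⟨i, a⟩ hp ⟨j, b⟩ hq h
    simp only [Finset.mem_filter, Finset.mem_product, Finset.mem_univ, Finset.mem_erase,
      true_and] at hp hq
    replace h : (Pi.single i a : Fin n → F4) = Pi.single j b := h
    have hij : i = j := by
      by_contra hij
      have h2 := congrFun h i
      rw [Pi.single_eq_same, Pi.single_eq_of_ne hij] at h2
      exact hp.1.1 h2
    subst hij
    have h2 := congrFun h i
    rw [Pi.single_eq_same, Pi.single_eq_same] at h2
    simp [h2]
  · intro u hu
    simp only [Wt, Finset.mem_filter, Finset.mem_univ, true_and] at hu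
    obtain ⟨hud, hu1⟩ := hu
    rw [supp_card] at hu1
    obtain ⟨i, hi⟩ := Finset.card_eq_one.1 hu1
    have hiu : u i ≠ 0 := by
      have : i ∈ Finset.univ.filter (fun k => u k ≠ 0) := by rw [hi]; simp
      simpa using this
    have hu_eq : u = Pi.single i (u i) := by
      funext k
      by_cases hk : k = i
      · subst hk; rw [Pi.single_eq_same]
      · rw [Pi.single_eq_of_ne hk]
        by_contra hne
        have : k ∈ Finset.univ.filter (fun k => u k ≠ 0) := by simpa using hne
        rw [hi] at this
        exact hk (by simpa using this)
    refine ⟨(i, u i), ?_, hu_eq.symm⟩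
    simp only [Finset.mem_filter, Finset.mem_product, Finset.mem_univ, Finset.mem_erase,
      true_and]
    exact ⟨⟨hiu, trivial⟩, hu_eq ▸ hud⟩

lemma zero_mem_trDual {n : ℕ} (C : AddSubgroup (Fin n → F4)) :
    (0 : Fin n → F4) ∈ trDual (C : Set (Fin n → F4)) := by
  intro v _
  unfold trInner
  simp

lemma cardA : (Finset.univ.erase (0 : F4)).card = 3 := by
  rw [Finset.card_erase_of_mem (Finset.mem_univ 0), Finset.card_univ, F4card]

open Classical in
lemma count_diag {n : ℕ} (C : AddSubgroup (Fin n → F4)) :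
    ∑ i : Fin n, ∑ a ∈ Finset.univ.erase (0 : F4), ∑ b ∈ Finset.univ.erase (0 : F4),
        (if (Pi.single i a + Pi.single i b : Fin n → F4) ∈ trDual (C : Set (Fin n → F4))
          then (1 : ℤ) else 0) =
      3 * n + 2 * ((Wt n C 1).card : ℤ) := by
  set A := Finset.univ.erase (0 : F4) with hA
  have key : ∀ i : Fin n, ∑ a ∈ A, ∑ b ∈ A,
      (if (Pi.single i a + Pi.single i b : Fin n → F4) ∈ trDual (C : Set (Fin n → F4))
        then (1 : ℤ) else 0) =
      3 + 2 * ∑ a ∈ A,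
        (if (Pi.single i a : Fin n → F4) ∈ trDual (C : Set (Fin n → F4))
          then (1 : ℤ) else 0) := by
    intro i
    set g : F4 → ℤ := fun c =>
      if (Pi.single i c : Fin n → F4) ∈ trDual (C : Set (Fin n → F4)) then (1 : ℤ) else 0
      with hg
    have hg0 : g 0 = 1 := by
      rw [hg]
      simp only [Pi.single_zero]
      rw [if_pos (zero_mem_trDual C)]
    have hsum_univ : ∑ c : F4, g c = 1 + ∑ a ∈ A, g a := by
      rw [← Finset.add_sum_erase _ g (Finset.mem_univ 0), hg0, hA]
    have inner : ∀ a ∈ A, ∑ b ∈ A,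
        (if (Pi.single i a + Pi.single i b : Fin n → F4) ∈ trDual (C : Set (Fin n → F4))
          then (1 : ℤ) else 0) = 1 + ∑ c ∈ A, g c - g a := by
      intro a ha
      have step1 : ∑ b ∈ A,
          (if (Pi.single i a + Pi.single i b : Fin n → F4) ∈ trDual (C : Set (Fin n → F4))
            then (1 : ℤ) else 0) = ∑ c ∈ Finset.univ.erase a, g c := by
        refine Finset.sum_equiv (Equiv.addLeft a) ?_ ?_
        · intro b
          simp only [hA, Finset.mem_erase, Finset.mem_univ, and_true, Equiv.coe_addLeft]
          constructor
          · intro hb hc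
            exact hb (by linear_combination hc)
          · intro hb hc
            subst hc
            exact hb (by ring)
        · intro b hb
          rw [hg]
          congr 1
          rw [← Pi.single_add]
          rfl
      rw [step1, Finset.sum_erase_eq_sub (Finset.mem_univ a), hsum_univ]
    rw [Finset.sum_congr rfl inner, Finset.sum_sub_distrib, Finset.sum_const, cardA]
    ring
  rw [Finset.sum_congr rfl (fun i _ => key i), Finset.sum_add_distrib, Finset.sum_const,
    ← Finset.mul_sum]
  simp only [Finset.card_univ, Fintype.card_fin, nsmul_eq_mul]
  rw [count1 C]
  ring

open Classical in
lemma count_off {n : ℕ} (C : AddSubgroup (Fin n → F4)) :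
    ∑ i : Fin n, ∑ j ∈ Finset.univ.erase i, ∑ a ∈ Finset.univ.erase (0 : F4),
        ∑ b ∈ Finset.univ.erase (0 : F4),
        (if (Pi.single i a + Pi.single j b : Fin n → F4) ∈ trDual (C : Set (Fin n → F4))
          then (1 : ℤ) else 0) =
      2 * ((Wt n C 2).card : ℤ) := by
  set A := Finset.univ.erase (0 : F4) with hA
  set D := trDual (C : Set (Fin n → F4)) with hD
  -- Step 1: rewrite as a card of a filtered product finset.
  set P : (Fin n × Fin n) × (F4 × F4) → Prop := fun t =>
    t.1.2 ≠ t.1.1 ∧ (Pi.single t.1.1 t.2.1 + Pi.single t.1.2 t.2.2 : Fin n → F4) ∈ D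
    with hP
  set S : Finset ((Fin n × Fin n) × (F4 × F4)) :=
    ((Finset.univ ×ˢ Finset.univ) ×ˢ (A ×ˢ A)).filter P with hS
  have step1 : ∑ i : Fin n, ∑ j ∈ Finset.univ.erase i, ∑ a ∈ A, ∑ b ∈ A,
      (if (Pi.single i a + Pi.single j b : Fin n → F4) ∈ D then (1 : ℤ) else 0)
      = (S.card : ℤ) := by
    have h1 : ∀ i : Fin n, ∑ j ∈ Finset.univ.erase i, ∑ a ∈ A, ∑ b ∈ A,
        (if (Pi.single i a + Pi.single j b : Fin n → F4) ∈ D then (1 : ℤ) else 0)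
        = ∑ j : Fin n, ∑ a ∈ A, ∑ b ∈ A,
          (if (j ≠ i ∧ (Pi.single i a + Pi.single j b : Fin n → F4) ∈ D)
            then (1 : ℤ) else 0) := by
      intro i
      rw [← Finset.add_sum_erase _ _ (Finset.mem_univ i)]
      have hzero : ∑ a ∈ A, ∑ b ∈ A,
          (if (i ≠ i ∧ (Pi.single i a + Pi.single i b : Fin n → F4) ∈ D)
            then (1 : ℤ) else 0) = 0 := by
        simp
      rw [hzero, zero_add]
      refine Finset.sum_congr rfl fun j hj => ?_
      have hji : j ≠ i := (Finset.mem_erase.1 hj).1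
      refine Finset.sum_congr rfl fun a _ => Finset.sum_congr rfl fun b _ => ?_
      simp [hji]
    rw [Finset.sum_congr rfl fun i _ => h1 i]
    have h2 : ∑ i : Fin n, ∑ j : Fin n, ∑ a ∈ A, ∑ b ∈ A,
        (if (j ≠ i ∧ (Pi.single i a + Pi.single j b : Fin n → F4) ∈ D)
          then (1 : ℤ) else 0)
        = ∑ t ∈ (Finset.univ ×ˢ Finset.univ) ×ˢ (A ×ˢ A),
            (if P t then (1 : ℤ) else 0) := by
      rw [Finset.sum_product ((Finset.univ : Finset (Fin n)) ×ˢ (Finset.univ : Finset (Fin n)))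
        (A ×ˢ A) (fun t => if P t then (1 : ℤ) else 0)]
      rw [Finset.sum_product (Finset.univ : Finset (Fin n)) (Finset.univ : Finset (Fin n))]
      refine Finset.sum_congr rfl fun i _ => Finset.sum_congr rfl fun j _ => ?_
      rw [Finset.sum_product A A]
    rw [h2, Finset.sum_boole, hS]
  rw [step1]
  -- Step 2: the filtered finset has twice the cardinality of `Wt n C 2`.
  have step2 : S.card = 2 * (Wt n C 2).card := by
    have hmaps : ∀ t ∈ S, (Pi.single t.1.1 t.2.1 + Pi.single t.1.2 t.2.2 : Fin n → F4)
        ∈ Wt n C 2 := by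
      intro t ht
      rw [hS, Finset.mem_filter] at ht
      obtain ⟨hmem, hne, hdual⟩ := ht
      simp only [Finset.mem_product, Finset.mem_univ, true_and, hA, Finset.mem_erase,
        and_true] at hmem
      simp only [Wt, Finset.mem_filter, Finset.mem_univ, true_and]
      exact ⟨hdual, hammingNorm_pair _ _ (Ne.symm hne) _ _ hmem.1 hmem.2⟩
    rw [Finset.card_eq_sum_card_fiberwise hmaps]
    have hfib : ∀ u ∈ Wt n C 2, (S.filter
        (fun t => (Pi.single t.1.1 t.2.1 + Pi.single t.1.2 t.2.2 : Fin n → F4) = u)).card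
        = 2 := by
      intro u hu
      simp only [Wt, Finset.mem_filter, Finset.mem_univ, true_and] at hu
      obtain ⟨hud, hu2⟩ := hu
      rw [supp_card] at hu2
      obtain ⟨i, j, hij, hsupp⟩ := Finset.card_eq_two.1 hu2
      have hui : u i ≠ 0 := by
        have : i ∈ Finset.univ.filter (fun k => u k ≠ 0) := by rw [hsupp]; simp
        simpa using this
      have huj : u j ≠ 0 := by
        have : j ∈ Finset.univ.filter (fun k => u k ≠ 0) := by rw [hsupp]; simp
        simpa using this
      have hu_eq : u = Pi.single i (u i) + Pi.single j (u j) := by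
        funext k
        by_cases hk : k = i
        · subst hk
          rw [Pi.add_apply, Pi.single_eq_same, Pi.single_eq_of_ne hij, add_zero]
        · by_cases hk' : k = j
          · subst hk'
            rw [Pi.add_apply, Pi.single_eq_same, Pi.single_eq_of_ne hk, zero_add]
          · rw [Pi.add_apply, Pi.single_eq_of_ne hk, Pi.single_eq_of_ne hk', add_zero]
            by_contra hne
            have : k ∈ Finset.univ.filter (fun m => u m ≠ 0) := by
              simpa using hne
            rw [hsupp] at this
            simp only [Finset.mem_insert, Finset.mem_singleton] at this
            rcases this with h | h
            · exact hk h
            · exact hk' h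
      have hfiber : S.filter
          (fun t => (Pi.single t.1.1 t.2.1 + Pi.single t.1.2 t.2.2 : Fin n → F4) = u)
          = {((i, j), (u i, u j)), ((j, i), (u j, u i))} := by
        ext t
        simp only [Finset.mem_filter, hS, Finset.mem_insert, Finset.mem_singleton]
        constructor
        · rintro ⟨⟨hmem, hne, hdual⟩, hft⟩
          obtain ⟨⟨i', j'⟩, a, b⟩ := t
          simp only [Finset.mem_product, Finset.mem_univ, true_and, hA, Finset.mem_erase,
            and_true] at hmem
          simp only [hP] at hne hdual hft ⊢
          obtain ⟨ha, hb⟩ := hmem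
          replace hne : j' ≠ i' := hne
          -- evaluate
          have hvi : u i' = a := by
            rw [← hft, Pi.add_apply, Pi.single_eq_same, Pi.single_eq_of_ne (Ne.symm hne),
              add_zero]
          have hvj : u j' = b := by
            rw [← hft, Pi.add_apply, Pi.single_eq_same, Pi.single_eq_of_ne hne, zero_add]
          have hsupp' : Finset.univ.filter (fun k => u k ≠ 0) = {i', j'} := by
            rw [← hft]
            exact pair_supp i' j' (Ne.symm hne) a b ha hb
          have hpair : ({i', j'} : Finset (Fin n)) = {i, j} := by rw [← hsupp', hsupp]
          have hi'mem : i' ∈ ({i, j} : Finset (Fin n)) := by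
            rw [← hpair]; simp
          have hj'mem : j' ∈ ({i, j} : Finset (Fin n)) := by
            rw [← hpair]; simp
          simp only [Finset.mem_insert, Finset.mem_singleton] at hi'mem hj'mem
          rcases hi'mem with h1 | h1
          · subst h1
            rcases hj'mem with h2 | h2
            · exact absurd h2 hne
            · subst h2
              left
              rw [hvi, hvj]
          · subst h1
            rcases hj'mem with h2 | h2
            · subst h2
              right
              rw [hvi, hvj]
            · exact absurd h2 hne
        · rintro (rfl | rfl) <;>
          · refine ⟨⟨?_, ?_, ?_⟩, ?_⟩
            · simp only [Finset.mem_product, Finset.mem_univ, true_and, hA,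
                Finset.mem_erase, and_true]
              first
              | exact ⟨hui, huj⟩
              | exact ⟨huj, hui⟩
            · simp only [hP]
              first
              | exact Ne.symm hij
              | exact hij
            · simp only [hP]
              first
              | rw [← hu_eq]; exact hud
              | rw [show (Pi.single j (u j) + Pi.single i (u i) : Fin n → F4) = u from
                  (add_comm _ _).trans hu_eq.symm]; exact hud
            · show _ = u
              first
              | exact hu_eq.symm
              | (rw [add_comm]; exact hu_eq.symm)
      rw [hfiber]
      rw [Finset.card_insert_of_notMem, Finset.card_singleton]
      simp only [Finset.mem_singleton, Prod.mk.injEq, not_and]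
      intro h
      exact absurd h.1 hij
    rw [Finset.sum_congr rfl hfib, Finset.sum_const, smul_eq_mul, mul_comm]
  rw [step2]
  push_cast
  ring

open Classical in
lemma horth {n : ℕ} (C : AddSubgroup (Fin n → F4)) (u : Fin n → F4) :
    ∑ v ∈ (Set.toFinite (C : Set (Fin n → F4))).toFinset, χ (trInner u v) =
      (((Set.toFinite (C : Set (Fin n → F4))).toFinset.card : ℕ) : ℤ) *
        (if u ∈ trDual (C : Set (Fin n → F4)) then (1 : ℤ) else 0) := by
  rw [sum_char C u]
  by_cases h : u ∈ trDual (C : Set (Fin n → F4))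
  · rw [if_pos h, if_pos h, mul_one]
  · rw [if_neg h, if_neg h, mul_zero]

open Classical in
lemma moment1 {n : ℕ} (C : AddSubgroup (Fin n → F4)) :
    ∑ v ∈ (Set.toFinite (C : Set (Fin n → F4))).toFinset,
      (∑ i : Fin n, ∑ a ∈ Finset.univ.erase (0 : F4), χ (trInner (Pi.single i a) v)) =
    (((Set.toFinite (C : Set (Fin n → F4))).toFinset.card : ℕ) : ℤ) *
      ((Wt n C 1).card : ℤ) := by
  calc ∑ v ∈ (Set.toFinite (C : Set (Fin n → F4))).toFinset,
      (∑ i : Fin n, ∑ a ∈ Finset.univ.erase (0 : F4), χ (trInner (Pi.single i a) v))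
      = ∑ i : Fin n, ∑ v ∈ (Set.toFinite (C : Set (Fin n → F4))).toFinset,
          ∑ a ∈ Finset.univ.erase (0 : F4), χ (trInner (Pi.single i a) v) :=
        Finset.sum_comm
    _ = ∑ i : Fin n, ∑ a ∈ Finset.univ.erase (0 : F4),
          ∑ v ∈ (Set.toFinite (C : Set (Fin n → F4))).toFinset,
            χ (trInner (Pi.single i a) v) :=
        Finset.sum_congr rfl fun i _ => Finset.sum_comm
    _ = ∑ i : Fin n, ∑ a ∈ Finset.univ.erase (0 : F4),
          (((Set.toFinite (C : Set (Fin n → F4))).toFinset.card : ℕ) : ℤ) *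
            (if (Pi.single i a : Fin n → F4) ∈ trDual (C : Set (Fin n → F4))
              then (1 : ℤ) else 0) :=
        Finset.sum_congr rfl fun i _ => Finset.sum_congr rfl fun a _ => horth C _
    _ = (((Set.toFinite (C : Set (Fin n → F4))).toFinset.card : ℕ) : ℤ) *
          ∑ i : Fin n, ∑ a ∈ Finset.univ.erase (0 : F4),
            (if (Pi.single i a : Fin n → F4) ∈ trDual (C : Set (Fin n → F4))
              then (1 : ℤ) else 0) := by
        rw [Finset.mul_sum]
        exact Finset.sum_congr rfl fun i _ => (Finset.mul_sum _ _ _).symm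
    _ = (((Set.toFinite (C : Set (Fin n → F4))).toFinset.card : ℕ) : ℤ) *
          ((Wt n C 1).card : ℤ) := by rw [count1 C]

set_option maxHeartbeats 1000000 in
open Classical in
lemma moment2 {n : ℕ} (C : AddSubgroup (Fin n → F4)) :
    ∑ v ∈ (Set.toFinite (C : Set (Fin n → F4))).toFinset,
      (∑ i : Fin n, ∑ a ∈ Finset.univ.erase (0 : F4), χ (trInner (Pi.single i a) v)) ^ 2 =
    (((Set.toFinite (C : Set (Fin n → F4))).toFinset.card : ℕ) : ℤ) *
      (3 * (n : ℤ) + 2 * ((Wt n C 1).card : ℤ) + 2 * ((Wt n C 2).card : ℤ)) := by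
  have step1 : ∑ v ∈ (Set.toFinite (C : Set (Fin n → F4))).toFinset,
      (∑ i : Fin n, ∑ a ∈ Finset.univ.erase (0 : F4), χ (trInner (Pi.single i a) v)) ^ 2
      = ∑ v ∈ (Set.toFinite (C : Set (Fin n → F4))).toFinset,
          ∑ i : Fin n, ∑ j : Fin n, ∑ a ∈ Finset.univ.erase (0 : F4),
            ∑ b ∈ Finset.univ.erase (0 : F4),
              χ (trInner (Pi.single i a + Pi.single j b) v) := by
    refine Finset.sum_congr rfl fun v _ => ?_
    rw [sq, Finset.sum_mul_sum]
    refine Finset.sum_congr rfl fun i _ => Finset.sum_congr rfl fun j _ => ?_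
    rw [Finset.sum_mul_sum]
    exact Finset.sum_congr rfl fun a _ => Finset.sum_congr rfl fun b _ =>
      chi_trInner_mul _ _ v
  have step2 : ∑ v ∈ (Set.toFinite (C : Set (Fin n → F4))).toFinset,
          ∑ i : Fin n, ∑ j : Fin n, ∑ a ∈ Finset.univ.erase (0 : F4),
            ∑ b ∈ Finset.univ.erase (0 : F4),
              χ (trInner (Pi.single i a + Pi.single j b) v)
      = ∑ i : Fin n, ∑ j : Fin n, ∑ a ∈ Finset.univ.erase (0 : F4),
          ∑ b ∈ Finset.univ.erase (0 : F4),
            ∑ v ∈ (Set.toFinite (C : Set (Fin n → F4))).toFinset,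
              χ (trInner (Pi.single i a + Pi.single j b) v) := by
    rw [Finset.sum_comm]
    refine Finset.sum_congr rfl fun i _ => ?_
    rw [Finset.sum_comm]
    refine Finset.sum_congr rfl fun j _ => ?_
    rw [Finset.sum_comm]
    refine Finset.sum_congr rfl fun a _ => ?_
    rw [Finset.sum_comm]
  rw [step1, step2]
  simp only [horth C, ← Finset.mul_sum]
  congr 1
  have hsplit : ∀ i : Fin n, ∑ j : Fin n, ∑ a ∈ Finset.univ.erase (0 : F4),
      ∑ b ∈ Finset.univ.erase (0 : F4),
        (if (Pi.single i a + Pi.single j b : Fin n → F4) ∈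
            trDual (C : Set (Fin n → F4)) then (1 : ℤ) else 0) =
      (∑ a ∈ Finset.univ.erase (0 : F4), ∑ b ∈ Finset.univ.erase (0 : F4),
        (if (Pi.single i a + Pi.single i b : Fin n → F4) ∈
            trDual (C : Set (Fin n → F4)) then (1 : ℤ) else 0)) +
      ∑ j ∈ Finset.univ.erase i, ∑ a ∈ Finset.univ.erase (0 : F4),
        ∑ b ∈ Finset.univ.erase (0 : F4),
          (if (Pi.single i a + Pi.single j b : Fin n → F4) ∈
              trDual (C : Set (Fin n → F4)) then (1 : ℤ) else 0) :=
    fun i => (Finset.add_sum_erase _ _ (Finset.mem_univ i)).symm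
  rw [Finset.sum_congr rfl fun i _ => hsplit i, Finset.sum_add_distrib]
  rw [count_diag C, count_off C]

set_option maxHeartbeats 1000000 in
/-- (Second Pless power moment, `q = 4`.)  For an additive code
`C ⊆ F4^n` with `M` codewords and whose trace-Hermitian dual has `A₁⊥` codewords of
weight `1` and `A₂⊥` codewords of weight `2`:
`16·Σ_{v ∈ C} wt_H(v)² = M·((9n² + 3n) − (6n − 2)·A₁⊥ + 2·A₂⊥)`. -/
theorem second_pless_power_moment (n M A1 A2 : ℕ) (C : AddSubgroup (Fin n → F4))
    (hM : Nat.card C = M)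
    (hA1 : {u ∈ trDual (C : Set (Fin n → F4)) | hammingNorm u = 1}.ncard = A1)
    (hA2 : {u ∈ trDual (C : Set (Fin n → F4)) | hammingNorm u = 2}.ncard = A2) :
    (16 : ℤ) * ∑ v ∈ (Set.toFinite (C : Set (Fin n → F4))).toFinset,
        (hammingNorm v : ℤ) ^ 2 =
      (M : ℤ) * ((9 * (n : ℤ) ^ 2 + 3 * (n : ℤ)) - (6 * (n : ℤ) - 2) * (A1 : ℤ)
        + 2 * (A2 : ℤ)) := by
  classical
  have hMc : (((Set.toFinite (C : Set (Fin n → F4))).toFinset.card : ℕ) : ℤ) = (M : ℤ) := by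
    have h1 : Nat.card (C : Set (Fin n → F4)) = M := hM
    rw [Nat.card_coe_set_eq, Set.ncard_eq_toFinset_card _ (Set.toFinite _)] at h1
    exact_mod_cast h1
  have hA1c : (((Wt n C 1).card : ℕ) : ℤ) = (A1 : ℤ) := by
    rw [Wt_card n C 1] at hA1; exact_mod_cast hA1
  have hA2c : (((Wt n C 2).card : ℕ) : ℤ) = (A2 : ℤ) := by
    rw [Wt_card n C 2] at hA2; exact_mod_cast hA2
  have hpt : ∀ v : Fin n → F4, (16 : ℤ) * (hammingNorm v : ℤ) ^ 2 =
      9 * (n : ℤ) ^ 2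
      - 6 * (n : ℤ) *
        (∑ i : Fin n, ∑ a ∈ Finset.univ.erase (0 : F4), χ (trInner (Pi.single i a) v))
      + (∑ i : Fin n, ∑ a ∈ Finset.univ.erase (0 : F4),
          χ (trInner (Pi.single i a) v)) ^ 2 := by
    intro v
    rw [weight_formula v]
    ring
  calc (16 : ℤ) * ∑ v ∈ (Set.toFinite (C : Set (Fin n → F4))).toFinset,
        (hammingNorm v : ℤ) ^ 2
      = ∑ v ∈ (Set.toFinite (C : Set (Fin n → F4))).toFinset,
          (16 : ℤ) * (hammingNorm v : ℤ) ^ 2 := Finset.mul_sum _ _ _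
    _ = ∑ v ∈ (Set.toFinite (C : Set (Fin n → F4))).toFinset,
          (9 * (n : ℤ) ^ 2
            - 6 * (n : ℤ) *
              (∑ i : Fin n, ∑ a ∈ Finset.univ.erase (0 : F4),
                χ (trInner (Pi.single i a) v))
            + (∑ i : Fin n, ∑ a ∈ Finset.univ.erase (0 : F4),
                χ (trInner (Pi.single i a) v)) ^ 2) :=
        Finset.sum_congr rfl fun v _ => hpt v
    _ = (((Set.toFinite (C : Set (Fin n → F4))).toFinset.card : ℕ) : ℤ) *
          (9 * (n : ℤ) ^ 2)
        - 6 * (n : ℤ) *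
          ∑ v ∈ (Set.toFinite (C : Set (Fin n → F4))).toFinset,
            (∑ i : Fin n, ∑ a ∈ Finset.univ.erase (0 : F4),
              χ (trInner (Pi.single i a) v))
        + ∑ v ∈ (Set.toFinite (C : Set (Fin n → F4))).toFinset,
            (∑ i : Fin n, ∑ a ∈ Finset.univ.erase (0 : F4),
              χ (trInner (Pi.single i a) v)) ^ 2 := by
        rw [Finset.sum_add_distrib, Finset.sum_sub_distrib, Finset.sum_const,
          ← Finset.mul_sum]
        simp only [nsmul_eq_mul]
    _ = (M : ℤ) * ((9 * (n : ℤ) ^ 2 + 3 * (n : ℤ)) - (6 * (n : ℤ) - 2) * (A1 : ℤ)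
        + 2 * (A2 : ℤ)) := by
        rw [moment1 C, moment2 C, hMc, hA1c, hA2c]
        ring
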